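/- Fix n ∈ ℕ and real parameters a, b, α, β with (a−b+1|q)_n (2a−β+1|q)_n (a−b−α+1|q)_n ≠ 0, and set λ̃_n = [n]_q [2b−2a+α+β−n−1]_q. Then for every real s, writing ũ_n(s) = ũ_n^{α,β}(x(s),a,b)_q, one has [2s]_q σ̃(−s−1) ũ_n(s+1) + [2s+2]_q σ̃(s) ũ_n(s−1) + (λ̃_n [2s]_q [2s+1]_q [2s+2]_q − [2s]_q σ̃(−s−1) − [2s+2]_q σ̃(s)) ũ_n(s) = 0. -/

import Mathlib

open Finset

/-- The symmetric q-number `[s]_q = (q^{s/2} - q^{-s/2})/(q^{1/2} - q^{-1/2})`. -/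
noncomputable def qnum (q s : ℝ) : ℝ :=
  (q ^ (s / 2) - q ^ (-s / 2)) / (q ^ ((1 : ℝ) / 2) - q ^ (-(1 : ℝ) / 2))

/-- The symmetric q-factorial `[n]_q! = ∏_{m=1}^n [m]_q`. -/
noncomputable def qfact (q : ℝ) (n : ℕ) : ℝ :=
  ∏ m ∈ Finset.range n, qnum q ((m : ℝ) + 1)

/-- The symmetric q-Pochhammer symbol `(a|q)_k = ∏_{m=0}^{k-1} [a+m]_q`. -/
noncomputable def qpoch (q a : ℝ) (k : ℕ) : ℝ :=
  ∏ m ∈ Finset.range k, qnum q (a + (m : ℝ))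

/-- The q-Racah polynomial `u_n^{α,β}(x(s),a,b)_q` on the lattice `x(s)=[s]_q[s+1]_q`. -/
noncomputable def racahU (q a b α β : ℝ) (n : ℕ) (s : ℝ) : ℝ :=
  qpoch q (a - b + 1) n * qpoch q (β + 1) n * qpoch q (a + b + α + 1) n / qfact q n *
    ∑ k ∈ Finset.range (n + 1),
      qpoch q (-(n : ℝ)) k * qpoch q (α + β + (n : ℝ) + 1) k * qpoch q (a - s) k *
          qpoch q (a + s + 1) k /
        (qpoch q 1 k * qpoch q (a - b + 1) k * qpoch q (β + 1) k *
          qpoch q (a + b + α + 1) k)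

/-- The alternative q-Racah polynomial `ũ_n^{α,β}(x(s),a,b)_q`. -/
noncomputable def racahUt (q a b α β : ℝ) (n : ℕ) (s : ℝ) : ℝ :=
  qpoch q (a - b + 1) n * qpoch q (2 * a - β + 1) n * qpoch q (a - b - α + 1) n / qfact q n *
    ∑ k ∈ Finset.range (n + 1),
      qpoch q (-(n : ℝ)) k * qpoch q (2 * a - 2 * b - α - β + (n : ℝ) + 1) k *
          qpoch q (a - s) k * qpoch q (a + s + 1) k /
        (qpoch q 1 k * qpoch q (a - b + 1) k * qpoch q (2 * a - β + 1) k *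
          qpoch q (a - b - α + 1) k)

/-- `σ(s) = [s-a]_q [s+b]_q [s+a-β]_q [b+α-s]_q`. -/
noncomputable def racahSigma (q a b α β s : ℝ) : ℝ :=
  qnum q (s - a) * qnum q (s + b) * qnum q (s + a - β) * qnum q (b + α - s)

/-- `σ(-s-1) = [s+a+1]_q [b-s-1]_q [s-a+β+1]_q [b+α+s+1]_q`. -/
noncomputable def racahSigmaM (q a b α β s : ℝ) : ℝ :=
  qnum q (s + a + 1) * qnum q (b - s - 1) * qnum q (s - a + β + 1) * qnum q (b + α + s + 1)

/-- `σ̃(s) = [s-a]_q [s+b]_q [s-a+β]_q [b+α+s]_q`. -/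
noncomputable def racahSigmaT (q a b α β s : ℝ) : ℝ :=
  qnum q (s - a) * qnum q (s + b) * qnum q (s - a + β) * qnum q (b + α + s)

/-- `σ̃(-s-1) = [s+a+1]_q [b-s-1]_q [s+a-β+1]_q [b+α-s-1]_q`. -/
noncomputable def racahSigmaTM (q a b α β s : ℝ) : ℝ :=
  qnum q (s + a + 1) * qnum q (b - s - 1) * qnum q (s + a - β + 1) * qnum q (b + α - s - 1)

/-- `τ_n(s)` for the q-Racah polynomials. -/
noncomputable def racahTau (q a b α β : ℝ) (n : ℕ) (s : ℝ) : ℝ :=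
  -qnum q (α + β + 2 * (n : ℝ) + 2) * qnum q (s + (n : ℝ) / 2) * qnum q (s + (n : ℝ) / 2 + 1) +
    qnum q (a + (n : ℝ) / 2 + 1) * qnum q (b - (n : ℝ) / 2 - 1) *
      qnum q (β + (n : ℝ) / 2 + 1 - a) * qnum q (b + α + (n : ℝ) / 2 + 1) -
    qnum q (a + (n : ℝ) / 2) * qnum q (b - (n : ℝ) / 2) * qnum q (β + (n : ℝ) / 2 - a) *
      qnum q (b + α + (n : ℝ) / 2)

/-! Write `ũ_n = K ∑_k C_k T_k` with `T_k(s) = (a-s|q)_k (a+s+1|q)_k` (`racahBasis`). The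
operator `D f(s) = [2s]_q σ̃(-s-1) (f(s+1) - f(s)) + [2s+2]_q σ̃(s) (f(s-1) - f(s))` (`racahDiff`)
acts on this basis as `D T_k = -[2s]_q [2s+1]_q [2s+2]_q (λ_k T_k + e_k T_{k-1})`, where
`λ_k = [k]_q [2b-2a+α+β-k-1]_q` (`racahLambda`) and `e_k` (`racahDenomFactor`) is the ratio of
consecutive denominators of `C_k`. As `C_{k+1} e_{k+1} = C_k (λ_n - λ_k)`, the sum
`D ũ_n + λ_n [2s]_q [2s+1]_q [2s+2]_q ũ_n` telescopes to zero. The q-number identities behind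
these steps are `[A][B] - [C][D] = [A-D][B-D]` for `A + B = C + D` and one quartic identity,
both checked by expanding into powers `q^{x/2}`. -/

section

noncomputable def halfPow (q t : ℝ) : ℝ := q ^ (t / 2)

variable {q : ℝ}

lemma halfPow_ne_zero (hq : 0 < q) (t : ℝ) : halfPow q t ≠ 0 :=
  (Real.rpow_pos_of_pos hq _).ne'

lemma halfPow_add (hq : 0 < q) (x y : ℝ) : halfPow q (x + y) = halfPow q x * halfPow q y := by
  rw [halfPow, halfPow, halfPow, add_div, Real.rpow_add hq]

lemma halfPow_sub (hq : 0 < q) (x y : ℝ) : halfPow q (x - y) = halfPow q x / halfPow q y := by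
  rw [halfPow, halfPow, halfPow, sub_div, Real.rpow_sub hq]

lemma halfPow_neg (hq : 0 < q) (x : ℝ) : halfPow q (-x) = (halfPow q x)⁻¹ := by
  rw [halfPow, halfPow, neg_div, Real.rpow_neg hq.le]

lemma halfPow_two_mul (hq : 0 < q) (x : ℝ) : halfPow q (2 * x) = halfPow q x * halfPow q x := by
  rw [two_mul, halfPow_add hq]

lemma qnum_eq_halfPow (hq : 0 < q) (x : ℝ) :
    qnum q x = (halfPow q x - (halfPow q x)⁻¹) * (halfPow q 1 - (halfPow q 1)⁻¹)⁻¹ := by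
  rw [qnum, ← div_eq_mul_inv, ← halfPow_neg hq, ← halfPow_neg hq, halfPow, halfPow, halfPow,
    halfPow, neg_div, neg_div]

lemma qnum_zero : qnum q 0 = 0 := by simp [qnum]

lemma qnum_ne_zero (hq0 : 0 < q) (hq1 : q ≠ 1) {x : ℝ} (hx : x ≠ 0) : qnum q x ≠ 0 := by
  refine div_ne_zero ?_ ?_ <;> rw [sub_ne_zero, Ne, Real.rpow_right_inj hq0 hq1] <;>
    [exact fun h => hx (by linarith); norm_num]

lemma qnum_mul_sub_qnum_mul (hq : 0 < q) {A B C D : ℝ} (h : A + B = C + D) :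
    qnum q A * qnum q B - qnum q C * qnum q D = qnum q (A - D) * qnum q (B - D) := by
  obtain rfl : C = A + B - D := by linarith
  have := halfPow_ne_zero hq A
  have := halfPow_ne_zero hq B
  have := halfPow_ne_zero hq D
  simp only [qnum_eq_halfPow hq, halfPow_add hq, halfPow_sub hq]
  field_simp
  ring

lemma qnum_neg (x : ℝ) : qnum q (-x) = -qnum q x := by
  simp only [qnum, neg_div, neg_neg]; ring

lemma qpoch_succ (x : ℝ) (k : ℕ) : qpoch q x (k + 1) = qpoch q x k * qnum q (x + k) :=
  prod_range_succ _ _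

lemma qpoch_succ' (x : ℝ) (k : ℕ) : qpoch q x (k + 1) = qnum q x * qpoch q (x + 1) k := by
  simp only [qpoch, prod_range_succ', Nat.cast_add, Nat.cast_one, Nat.cast_zero, add_zero]
  rw [mul_comm]
  congr 1
  exact prod_congr rfl fun m _ => by ring_nf

lemma qpoch_shift_sub (hq : 0 < q) (u v : ℝ) (k : ℕ) :
    qpoch q (u - 1) (k + 1) * qpoch q (v + 1) (k + 1) - qpoch q u (k + 1) * qpoch q v (k + 1) =
      qnum q (k + 1) * qnum q (u - v - 1) * (qpoch q u k * qpoch q (v + 1) k) := by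
  have key := qnum_mul_sub_qnum_mul hq (A := u - 1) (B := v + 1 + k) (C := u + k) (D := v)
    (by ring)
  rw [show u - 1 - v = u - v - 1 by ring, show v + 1 + k - v = k + 1 by ring] at key
  rw [qpoch_succ' (u - 1), sub_add_cancel, qpoch_succ (v + 1), qpoch_succ u, qpoch_succ' v]
  linear_combination (qpoch q u k * qpoch q (v + 1) k) * key

noncomputable def racahBasis (q a : ℝ) (k : ℕ) (s : ℝ) : ℝ :=
  qpoch q (a - s) k * qpoch q (a + s + 1) k

lemma racahBasis_succ_sub_add_one (hq : 0 < q) (a : ℝ) (k : ℕ) (s : ℝ) :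
    racahBasis q a (k + 1) (s + 1) - racahBasis q a (k + 1) s =
      -(qnum q (k + 1) * qnum q (2 * s + 2)) * (qpoch q (a - s) k * qpoch q (a + s + 2) k) := by
  have h := qpoch_shift_sub hq (a - s) (a + s + 1) k
  rw [show a - s - (a + s + 1) - 1 = -(2 * s + 2) by ring, qnum_neg,
    show a + s + 1 + 1 = a + s + 2 by ring] at h
  rw [racahBasis, racahBasis, show a - (s + 1) = a - s - 1 by ring,
    show a + (s + 1) + 1 = a + s + 2 by ring]
  linear_combination h

lemma racahBasis_succ_sub_sub_one (hq : 0 < q) (a : ℝ) (k : ℕ) (s : ℝ) :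
    racahBasis q a (k + 1) (s - 1) - racahBasis q a (k + 1) s =
      qnum q (k + 1) * qnum q (2 * s) * (qpoch q (a - s + 1) k * qpoch q (a + s + 1) k) := by
  have h := qpoch_shift_sub hq (a + s + 1) (a - s) k
  rw [show a + s + 1 - (a - s) - 1 = 2 * s by ring, add_sub_cancel_right] at h
  rw [racahBasis, racahBasis, show a - (s - 1) = a - s + 1 by ring,
    show a + (s - 1) + 1 = a + s by ring]
  linear_combination h

-- What is left of `racahDiff_racahBasis` once the factors `[s+a+1]_q` of `σ̃(-s-1)` and
-- `[s-a]_q` of `σ̃(s)` are absorbed into the Pochhammer symbols.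
lemma racah_sigma_identity (hq : 0 < q) (a b α β s x : ℝ) :
    qnum q (a + s + x) * (qnum q (b - s - 1) * qnum q (s + a - β + 1) * qnum q (b + α - s - 1)) +
        qnum q (a - s + x - 1) * (qnum q (s + b) * qnum q (s - a + β) * qnum q (b + α + s)) =
      qnum q (2 * s + 1) *
        (qnum q (2 * b - 2 * a + α + β - x - 1) * qnum q (a - s + x - 1) * qnum q (a + s + x) +
          qnum q (a - b + x) * qnum q (2 * a - β + x) * qnum q (a - b - α + x)) := by
  have := halfPow_ne_zero hq 1
  have := halfPow_ne_zero hq a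
  have := halfPow_ne_zero hq b
  have := halfPow_ne_zero hq α
  have := halfPow_ne_zero hq β
  have := halfPow_ne_zero hq s
  have := halfPow_ne_zero hq x
  simp only [qnum_eq_halfPow hq, halfPow_add hq, halfPow_sub hq, halfPow_two_mul hq]
  field_simp
  ring

noncomputable def racahLambda (q a b α β x : ℝ) : ℝ :=
  qnum q x * qnum q (2 * b - 2 * a + α + β - x - 1)

noncomputable def racahDenomFactor (q a b α β x : ℝ) : ℝ :=
  qnum q x * qnum q (a - b + x) * qnum q (2 * a - β + x) * qnum q (a - b - α + x)

noncomputable def racahDiff (q a b α β : ℝ) (f : ℝ → ℝ) (s : ℝ) : ℝ :=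
  qnum q (2 * s) * racahSigmaTM q a b α β s * (f (s + 1) - f s) +
    qnum q (2 * s + 2) * racahSigmaT q a b α β s * (f (s - 1) - f s)

lemma racahDiff_racahBasis (hq : 0 < q) (a b α β : ℝ) (k : ℕ) (s : ℝ) :
    racahDiff q a b α β (racahBasis q a k) s =
      -(qnum q (2 * s) * qnum q (2 * s + 1) * qnum q (2 * s + 2)) *
        (racahLambda q a b α β k * racahBasis q a k s +
          racahDenomFactor q a b α β k * racahBasis q a (k - 1) s) := by
  -- at `k = 0` the truncated `k - 1` is harmless, since `racahDenomFactor 0 = 0`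
  cases k with
  | zero => simp [racahDiff, racahBasis, racahLambda, racahDenomFactor, qpoch, qnum_zero]
  | succ k =>
    have hP : qnum q (a - s) * qpoch q (a - s + 1) k = qpoch q (a - s) k * qnum q (a - s + k) := by
      rw [← qpoch_succ', qpoch_succ]
    have hR : qnum q (s + a + 1) * qpoch q (a + s + 2) k =
        qpoch q (a + s + 1) k * qnum q (a + s + 1 + k) := by
      rw [show a + s + 2 = a + s + 1 + 1 by ring, show s + a + 1 = a + s + 1 by ring,
        ← qpoch_succ', qpoch_succ]
    have hsa : qnum q (s - a) = -qnum q (a - s) := by rw [← qnum_neg, neg_sub]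
    have key := racah_sigma_identity hq a b α β s (k + 1)
    rw [show a + s + (k + 1) = a + s + 1 + k by ring, show a - s + (k + 1) - 1 = a - s + k by ring]
      at key
    rw [racahDiff, racahBasis_succ_sub_add_one hq, racahBasis_succ_sub_sub_one hq]
    simp only [racahSigmaTM, racahSigmaT, racahLambda, racahDenomFactor, racahBasis, qpoch_succ,
      Nat.cast_add, Nat.cast_one, Nat.add_sub_cancel]
    set W := qnum q (k + 1) * qnum q (2 * s) * qnum q (2 * s + 2)
    linear_combination
      (-W * (qnum q (b - s - 1) * qnum q (s + a - β + 1) * qnum q (b + α - s - 1)) *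
          qpoch q (a - s) k) * hR +
        (-W * (qnum q (s + b) * qnum q (s - a + β) * qnum q (b + α + s)) * qpoch q (a + s + 1) k) *
          hP +
        (W * (qnum q (s + b) * qnum q (s - a + β) * qnum q (b + α + s)) *
          qpoch q (a - s + 1) k * qpoch q (a + s + 1) k) * hsa +
        (-W * qpoch q (a - s) k * qpoch q (a + s + 1) k) * key

lemma racahDiff_const_mul_sum (a b α β c : ℝ) (t : Finset ℕ) (d : ℕ → ℝ) (f : ℕ → ℝ → ℝ)
    (s : ℝ) :
    racahDiff q a b α β (fun s => c * ∑ k ∈ t, d k * f k s) s =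
      c * ∑ k ∈ t, d k * racahDiff q a b α β (f k) s := by
  simp only [racahDiff, mul_sum, ← sum_sub_distrib, ← sum_add_distrib]
  exact sum_congr rfl fun k _ => by ring

noncomputable def racahCoeff (q a b α β : ℝ) (n k : ℕ) : ℝ :=
  qpoch q (-(n : ℝ)) k * qpoch q (2 * a - 2 * b - α - β + n + 1) k /
    (qpoch q 1 k * qpoch q (a - b + 1) k * qpoch q (2 * a - β + 1) k * qpoch q (a - b - α + 1) k)

lemma racahUt_eq_sum (a b α β : ℝ) (n : ℕ) :
    racahUt q a b α β n = fun s =>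
      qpoch q (a - b + 1) n * qpoch q (2 * a - β + 1) n * qpoch q (a - b - α + 1) n / qfact q n *
        ∑ k ∈ range (n + 1), racahCoeff q a b α β n k * racahBasis q a k s := by
  funext s
  unfold racahUt racahCoeff racahBasis
  exact congrArg _ (sum_congr rfl fun k _ => by ring)

lemma qpoch_ne_zero_iff {x : ℝ} {n : ℕ} : qpoch q x n ≠ 0 ↔ ∀ m < n, qnum q (x + m) ≠ 0 := by
  simp [qpoch, prod_ne_zero_iff]

lemma qpoch_ne_zero_of_le {x : ℝ} {m n : ℕ} (h : qpoch q x n ≠ 0) (hmn : m ≤ n) :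
    qpoch q x m ≠ 0 :=
  qpoch_ne_zero_iff.mpr fun i hi => qpoch_ne_zero_iff.mp h i (hi.trans_le hmn)

lemma qpoch_one_ne_zero (hq0 : 0 < q) (hq1 : q ≠ 1) (k : ℕ) : qpoch q 1 k ≠ 0 :=
  qpoch_ne_zero_iff.mpr fun m _ => qnum_ne_zero hq0 hq1 (by positivity)

lemma racahCoeff_succ_mul (hq0 : 0 < q) (hq1 : q ≠ 1) {a b α β : ℝ} {n j : ℕ}
    (hX : qpoch q (a - b + 1) n ≠ 0) (hY : qpoch q (2 * a - β + 1) n ≠ 0)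
    (hZ : qpoch q (a - b - α + 1) n ≠ 0) (hj : j < n) :
    racahCoeff q a b α β n (j + 1) * racahDenomFactor q a b α β ((j + 1 : ℕ) : ℝ) =
      racahCoeff q a b α β n j * (racahLambda q a b α β n - racahLambda q a b α β j) := by
  have hdiff : racahLambda q a b α β n - racahLambda q a b α β j =
      qnum q (-n + j) * qnum q (2 * a - 2 * b - α - β + n + 1 + j) := by
    rw [racahLambda, racahLambda, qnum_mul_sub_qnum_mul hq0 (by ring)]
    ring_nf
  have := qpoch_one_ne_zero hq0 hq1 j
  have := qnum_ne_zero hq0 hq1 (x := 1 + j) (by positivity)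
  have := qpoch_ne_zero_of_le hX hj.le
  have := qpoch_ne_zero_of_le hY hj.le
  have := qpoch_ne_zero_of_le hZ hj.le
  have := qpoch_ne_zero_iff.mp hX j hj
  have := qpoch_ne_zero_iff.mp hY j hj
  have := qpoch_ne_zero_iff.mp hZ j hj
  rw [hdiff, racahCoeff, racahCoeff, racahDenomFactor]
  simp only [qpoch_succ]
  push_cast
  field_simp
  ring_nf

lemma sum_range_succ_sub_eq_zero {M : Type*} [AddCommGroup M] (f g : ℕ → M) (n : ℕ)
    (hg : g 0 = 0) (hf : f n = 0) (hfg : ∀ j < n, g (j + 1) = f j) :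
    ∑ k ∈ range (n + 1), (f k - g k) = 0 := by
  rw [sum_sub_distrib, sum_range_succ, sum_range_succ', hf, hg, add_zero, add_zero, sub_eq_zero]
  exact sum_congr rfl fun j hj => (hfg j (mem_range.mp hj)).symm

end

theorem stmt_12 (q : ℝ) (hq0 : 0 < q) (hq1 : q ≠ 1) (n : ℕ) (a b α β : ℝ)
    (hnz : qpoch q (a - b + 1) n * qpoch q (2 * a - β + 1) n *
      qpoch q (a - b - α + 1) n ≠ 0) :
    ∀ s : ℝ,
      qnum q (2 * s) * racahSigmaTM q a b α β s * racahUt q a b α β n (s + 1) +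
          qnum q (2 * s + 2) * racahSigmaT q a b α β s * racahUt q a b α β n (s - 1) +
          (qnum q (n : ℝ) * qnum q (2 * b - 2 * a + α + β - (n : ℝ) - 1) * qnum q (2 * s) *
                qnum q (2 * s + 1) * qnum q (2 * s + 2) -
              qnum q (2 * s) * racahSigmaTM q a b α β s -
              qnum q (2 * s + 2) * racahSigmaT q a b α β s) *
            racahUt q a b α β n s = 0 := by
  intro s
  obtain ⟨⟨hX, hY⟩, hZ⟩ := (mul_ne_zero_iff.mp hnz).imp_left mul_ne_zero_iff.mp
  calc _ = racahDiff q a b α β (racahUt q a b α β n) s +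
        racahLambda q a b α β n * (qnum q (2 * s) * qnum q (2 * s + 1) * qnum q (2 * s + 2)) *
          racahUt q a b α β n s := by
        rw [racahDiff, racahLambda]; ring
    _ = qpoch q (a - b + 1) n * qpoch q (2 * a - β + 1) n * qpoch q (a - b - α + 1) n /
          qfact q n * (qnum q (2 * s) * qnum q (2 * s + 1) * qnum q (2 * s + 2)) *
        ∑ k ∈ range (n + 1),
          (racahCoeff q a b α β n k * (racahLambda q a b α β n - racahLambda q a b α β k) *
              racahBasis q a k s -
            racahCoeff q a b α β n k * racahDenomFactor q a b α β k * racahBasis q a (k - 1) s) := by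
        rw [racahUt_eq_sum, racahDiff_const_mul_sum]
        simp only [racahDiff_racahBasis hq0, mul_sum, ← sum_add_distrib]
        exact sum_congr rfl fun k _ => by ring
    _ = 0 := by
        rw [sum_range_succ_sub_eq_zero, mul_zero]
        · simp [racahDenomFactor, qnum_zero]
        · simp
        · intro j hj
          rw [Nat.add_sub_cancel, ← racahCoeff_succ_mul hq0 hq1 hX hY hZ hj, mul_right_comm]
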